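/- Assume the setup below, and let U ∈ ℝ^{d×d} be symmetric positive definite with U ≼ (1/L_Ω)I. Fix w_t ∈ ℝ^d, v ∈ ℝ^d, define g = U^{-1}( w_t − prox_R^{U^{-1}}(w_t − U v) ), w_{t+1} = w_t − U g, and δ = ∇F(w_t) − v. Then for any minimizer w_* of P, (w_* − w_t)ᵀg + (1/2)‖g‖_U² ≤ P(w_*) − P(w_{t+1}) − ⟨w_* − w_{t+1}, δ⟩. -/

import Mathlib

/-!
The prox step makes `g - v = U⁻¹(w_t - Uv - w_{t+1})` a subgradient of `R` at `w_{t+1}`, so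
`R(w_*) ≥ R(w_{t+1}) + ⟨g - v, w_* - w_{t+1}⟩`. Convexity of `F` together with the descent lemma
for `F`, whose gradient is Lipschitz with constant `(1/n) ∑ Lᵢ ≤ L_Ω`, gives
`F(w_{t+1}) ≤ F(w_*) + ⟨∇F(w_t), w_{t+1} - w_*⟩ + (L_Ω/2)‖Ug‖²`, and `U ≼ L_Ω⁻¹ I` gives
`L_Ω ‖Ug‖² ≤ ‖g‖²_U`. Adding the three inequalities yields the bound.
-/

open scoped BigOperators RealInnerProductSpace

/-- `ℝ^d` as Euclidean space. -/
abbrev Euc (d : ℕ) := EuclideanSpace ℝ (Fin d)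

/-- Action of a `d × d` real matrix on a vector of `ℝ^d`. -/
noncomputable def mdot {d : ℕ} (M : Matrix (Fin d) (Fin d) ℝ) (x : Euc d) : Euc d :=
  Matrix.toEuclideanLin M x

/-- The quadratic form `‖x‖_M² = xᵀ M x` associated with a matrix `M`. -/
noncomputable def qf {d : ℕ} (M : Matrix (Fin d) (Fin d) ℝ) (x : Euc d) : ℝ :=
  ⟪x, mdot M x⟫

/-- `u` is a point of the scaled proximal operator `prox_R^M (w)`, i.e. a minimizer of
`y ↦ (1/2)‖y - w‖_M² + R y`, for an extended-real-valued `R`. -/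
def IsProxE {d : ℕ} (R : Euc d → EReal) (M : Matrix (Fin d) (Fin d) ℝ) (w u : Euc d) : Prop :=
  ∀ y, ((2⁻¹ * qf M (u - w) : ℝ) : EReal) + R u ≤ ((2⁻¹ * qf M (y - w) : ℝ) : EReal) + R y

/-- Convexity of an extended-real-valued function on `ℝ^d`. -/
def ERealConvexOn {d : ℕ} (R : Euc d → EReal) : Prop :=
  ∀ x y : Euc d, ∀ a b : ℝ, 0 ≤ a → 0 ≤ b → a + b = 1 →
    R (a • x + b • y) ≤ (a : EReal) * R x + (b : EReal) * R y

/-- Properness of an extended-real-valued function: never `-∞`, and finite somewhere. -/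
def ERealProper {d : ℕ} (R : Euc d → EReal) : Prop :=
  (∀ x, R x ≠ ⊥) ∧ (∃ x, R x ≠ ⊤)

/-- The average `F = (1/n) ∑ᵢ fᵢ`. -/
noncomputable def Favg {d n : ℕ} (f : Fin n → Euc d → ℝ) (x : Euc d) : ℝ :=
  (n : ℝ)⁻¹ * ∑ i, f i x

/-- The averaged gradient `∇F = (1/n) ∑ᵢ ∇fᵢ`. -/
noncomputable def gAvg {d n : ℕ} (gf : Fin n → Euc d → Euc d) (x : Euc d) : Euc d :=
  (n : ℝ)⁻¹ • ∑ i, gf i x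

/-- The composite objective `P = F + R` with extended-real-valued `R`. -/
noncomputable def Pobj {d n : ℕ} (f : Fin n → Euc d → ℝ) (R : Euc d → EReal) (x : Euc d) :
    EReal := ((Favg f x : ℝ) : EReal) + R x

open Set Filter Topology AffineMap

section Gradient

variable {E : Type*} [NormedAddCommGroup E] [InnerProductSpace ℝ E] [CompleteSpace E]
  {φ : E → ℝ} {x y g : E}

theorem HasGradientAt.hasDerivAt_comp_lineMap {t : ℝ}
    (hφ : HasGradientAt φ g (lineMap x y t)) :
    HasDerivAt (fun s : ℝ => φ (lineMap x y s)) ⟪g, y - x⟫ t :=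
  (hasGradientAt_iff_hasFDerivAt.mp hφ).comp_hasDerivAt t hasDerivAt_lineMap

theorem ConvexOn.add_inner_le_of_hasGradientAt (hconv : ConvexOn ℝ univ φ)
    (hφ : HasGradientAt φ g x) (y : E) : φ x + ⟪g, y - x⟫ ≤ φ y := by
  have hline := (hconv.comp_affineMap (lineMap x y)).le_slope_of_hasDerivAt
    (mem_univ 0) (mem_univ 1) zero_lt_one
    (HasGradientAt.hasDerivAt_comp_lineMap (t := 0) (by simpa using hφ))
  simp only [slope_def_field, Function.comp_apply, lineMap_apply_one, lineMap_apply_zero] at hline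
  linarith

theorem le_add_inner_add_of_lipschitz_gradient {φ' : E → E} {L : ℝ}
    (hφ : ∀ z, HasGradientAt φ (φ' z) z) (hL : ∀ a b, ‖φ' a - φ' b‖ ≤ L * ‖a - b‖) (x y : E) :
    φ y ≤ φ x + ⟪φ' x, y - x⟫ + L / 2 * ‖y - x‖ ^ 2 := by
  have hderiv (t : ℝ) := (hφ (lineMap x y t)).hasDerivAt_comp_lineMap
  have hbound (t : ℝ) : HasDerivAt
      (fun t => φ x + t * ⟪φ' x, y - x⟫ + L / 2 * t ^ 2 * ‖y - x‖ ^ 2)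
      (⟪φ' x, y - x⟫ + L * t * ‖y - x‖ ^ 2) t := by
    refine ((((hasDerivAt_id' t).mul_const _).const_add _).add
      (((hasDerivAt_pow 2 t).const_mul (L / 2)).mul_const (‖y - x‖ ^ 2))).congr_deriv ?_
    push_cast
    ring
  have hslope (t : ℝ) (ht : t ∈ Ico (0 : ℝ) 1) :
      ⟪φ' (lineMap x y t), y - x⟫ ≤ ⟪φ' x, y - x⟫ + L * t * ‖y - x‖ ^ 2 := by
    have hdist : ‖lineMap x y t - x‖ = t * ‖y - x‖ := by
      rw [lineMap_apply_module', add_sub_cancel_right, norm_smul, Real.norm_of_nonneg ht.1]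
    calc ⟪φ' (lineMap x y t), y - x⟫
        = ⟪φ' x, y - x⟫ + ⟪φ' (lineMap x y t) - φ' x, y - x⟫ := by
          rw [inner_sub_left]; ring
      _ ≤ ⟪φ' x, y - x⟫ + ‖φ' (lineMap x y t) - φ' x‖ * ‖y - x‖ := by
          gcongr; exact real_inner_le_norm _ _
      _ ≤ ⟪φ' x, y - x⟫ + L * (t * ‖y - x‖) * ‖y - x‖ := by
          gcongr; exact hdist ▸ hL _ _
      _ = ⟪φ' x, y - x⟫ + L * t * ‖y - x‖ ^ 2 := by ring
  simpa using image_le_of_deriv_right_le_deriv_boundary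
    (fun t _ => (hderiv t).continuousAt.continuousWithinAt)
    (fun t _ => (hderiv t).hasDerivWithinAt) (by simp)
    (fun t _ => (hbound t).continuousAt.continuousWithinAt)
    (fun t _ => (hbound t).hasDerivWithinAt) hslope (right_mem_Icc.mpr zero_le_one)

theorem le_add_inner_add_of_convexOn_of_lipschitz_gradient {φ' : E → E} {L : ℝ}
    (hconv : ConvexOn ℝ univ φ) (hφ : ∀ z, HasGradientAt φ (φ' z) z)
    (hL : ∀ a b, ‖φ' a - φ' b‖ ≤ L * ‖a - b‖) (x y z : E) :
    φ y ≤ φ z + ⟪φ' x, y - z⟫ + L / 2 * ‖y - x‖ ^ 2 := by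
  have hlower := hconv.add_inner_le_of_hasGradientAt (hφ x) z
  have hupper := le_add_inner_add_of_lipschitz_gradient hφ hL x y
  rw [show y - z = (y - x) - (z - x) by abel, inner_sub_right]
  linarith

end Gradient

theorem le_of_forall_le_add_mul {a b c : ℝ} (h : ∀ t ∈ Ioc (0 : ℝ) 1, a ≤ b + t * c) : a ≤ b := by
  have hlim : Tendsto (fun t : ℝ => b + t * c) (𝓝[>] 0) (𝓝 b) :=
    ((by fun_prop : Continuous fun t : ℝ => b + t * c).tendsto' 0 b (by simp)).mono_left
      nhdsWithin_le_nhds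
  exact ge_of_tendsto hlim (by filter_upwards [Ioc_mem_nhdsGT zero_lt_one] with t ht using h t ht)

section Matrix

open Matrix

variable {d : ℕ}

theorem mdot_mdot (A B : Matrix (Fin d) (Fin d) ℝ) (x : Euc d) :
    mdot A (mdot B x) = mdot (A * B) x := by
  simp [mdot, Matrix.toLpLin_apply, Matrix.mulVec_mulVec]

theorem mdot_one (x : Euc d) : mdot 1 x = x := by
  simp [mdot]

theorem mdot_sub (M : Matrix (Fin d) (Fin d) ℝ) (x y : Euc d) :
    mdot M (x - y) = mdot M x - mdot M y :=
  map_sub _ x y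

theorem mdot_mdot_inv {U : Matrix (Fin d) (Fin d) ℝ} (hU : IsUnit U.det) (x : Euc d) :
    mdot U (mdot U⁻¹ x) = x := by
  rw [mdot_mdot, Matrix.mul_nonsing_inv U hU, mdot_one]

theorem mdot_inv_mdot {U : Matrix (Fin d) (Fin d) ℝ} (hU : IsUnit U.det) (x : Euc d) :
    mdot U⁻¹ (mdot U x) = x := by
  rw [mdot_mdot, Matrix.nonsing_inv_mul U hU, mdot_one]

theorem qf_sub (A B : Matrix (Fin d) (Fin d) ℝ) (x : Euc d) : qf (A - B) x = qf A x - qf B x := by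
  simp [qf, mdot, inner_sub_right]

theorem qf_smul_left (c : ℝ) (A : Matrix (Fin d) (Fin d) ℝ) (x : Euc d) :
    qf (c • A) x = c * qf A x := by
  simp [qf, mdot, inner_smul_right]

theorem Matrix.IsHermitian.inner_mdot_left {M : Matrix (Fin d) (Fin d) ℝ} (hM : M.IsHermitian)
    (x y : Euc d) : ⟪mdot M x, y⟫ = ⟪x, mdot M y⟫ :=
  Matrix.isSymmetric_toEuclideanLin_iff.mpr hM x y

theorem Matrix.PosSemidef.qf_nonneg {M : Matrix (Fin d) (Fin d) ℝ} (hM : M.PosSemidef)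
    (x : Euc d) : 0 ≤ qf M x := by
  simpa [qf, mdot] using (Matrix.isPositive_toEuclideanLin_iff.mpr hM).inner_nonneg_right x

theorem Matrix.IsHermitian.qf_add_smul {M : Matrix (Fin d) (Fin d) ℝ} (hM : M.IsHermitian)
    (a b : Euc d) (t : ℝ) :
    qf M (a + t • b) = qf M a + 2 * t * ⟪mdot M a, b⟫ + t ^ 2 * qf M b := by
  simp only [qf, mdot, map_add, map_smul, inner_add_left, inner_add_right, inner_smul_left,
    inner_smul_right, RCLike.conj_to_real]
  rw [← mdot, ← mdot, hM.inner_mdot_left a b, ← hM.inner_mdot_left b a,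
    real_inner_comm a (mdot M b)]
  ring

open scoped MatrixOrder in
theorem mul_sq_norm_mdot_le_qf {U : Matrix (Fin d) (Fin d) ℝ} {c : ℝ} (hU : U.PosSemidef)
    (hUc : (c⁻¹ • (1 : Matrix (Fin d) (Fin d) ℝ) - U).PosSemidef) (x : Euc d) :
    c * ‖mdot U x‖ ^ 2 ≤ qf U x := by
  rcases le_or_gt c 0 with hc | hc
  · nlinarith [hU.qf_nonneg x, sq_nonneg ‖mdot U x‖]
  obtain ⟨S, hS, rfl⟩ : ∃ S : Matrix (Fin d) (Fin d) ℝ, Sᴴ = S ∧ S * S = U :=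
    ⟨CFC.sqrt U, (Matrix.nonneg_iff_posSemidef.mp (CFC.sqrt_nonneg U)).1,
      CFC.sqrt_mul_sqrt_self U hU.nonneg⟩
  -- With `S = √U`, `S (c⁻¹ I - U) S = c⁻¹ U - U²` is positive semidefinite.
  have hconj := (hUc.conjTranspose_mul_mul_same S).qf_nonneg x
  have hexpand : qf (Sᴴ * (c⁻¹ • 1 - S * S) * S) x = c⁻¹ * qf (S * S) x - ‖mdot (S * S) x‖ ^ 2 := by
    have hassoc : S * (S * S) * S = S * S * (S * S) := by noncomm_ring
    have hsq : qf (S * S * (S * S)) x = ‖mdot (S * S) x‖ ^ 2 := by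
      rw [qf, ← mdot_mdot, ← hU.isHermitian.inner_mdot_left, real_inner_self_eq_norm_sq]
    rw [hS, mul_sub, sub_mul, Matrix.mul_smul, Matrix.smul_mul, Matrix.mul_one, hassoc, qf_sub,
      qf_smul_left, hsq]
  rw [hexpand] at hconj
  calc c * ‖mdot (S * S) x‖ ^ 2 ≤ c * (c⁻¹ * qf (S * S) x) := by gcongr; linarith
    _ = qf (S * S) x := by field_simp

end Matrix

section Prox

variable {d : ℕ} {R : Euc d → EReal} {M : Matrix (Fin d) (Fin d) ℝ} {w u : Euc d}

theorem IsProxE.ne_top (hprox : IsProxE R M w u) {x : Euc d} (hx : R x ≠ ⊤) : R u ≠ ⊤ := by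
  intro hu
  have := hprox x
  rw [hu, EReal.add_top_of_ne_bot (EReal.coe_ne_bot _), top_le_iff] at this
  exact EReal.add_lt_top (EReal.coe_ne_top _) hx |>.ne this

theorem IsProxE.exists_eq_coe (hprox : IsProxE R M w u) (hR : ERealProper R) :
    ∃ r : ℝ, R u = r :=
  ⟨_, (EReal.coe_toReal (hprox.ne_top hR.2.choose_spec) (hR.1 u)).symm⟩

theorem ERealConvexOn.le_coe_add_coe {x y : Euc d} {r s a b : ℝ} (hR : ERealConvexOn R)
    (hx : R x = r) (hy : R y = s) (ha : 0 ≤ a) (hb : 0 ≤ b) (hab : a + b = 1) :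
    R (a • x + b • y) ≤ ((a * r + b * s : ℝ) : EReal) := by
  simpa [hx, hy] using hR x y a b ha hb hab

/-- `M (w - u)` is a subgradient of `R` at the proximal point `u`: compare `u` with the points
`u + t (y - u)` of the segment towards `y` and let `t → 0`. -/
theorem IsProxE.coe_add_inner_le (hprox : IsProxE R M w u) (hbot : ∀ x, R x ≠ ⊥)
    (hR : ERealConvexOn R) (hM : M.IsHermitian) {r : ℝ} (hu : R u = r) (y : Euc d) :
    ((r + ⟪mdot M (w - u), y - u⟫ : ℝ) : EReal) ≤ R y := by
  rcases eq_or_ne (R y) ⊤ with hy | hy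
  · simp [hy]
  obtain ⟨s, hs⟩ : ∃ s : ℝ, R y = s := ⟨(R y).toReal, (EReal.coe_toReal hy (hbot y)).symm⟩
  rw [hs, EReal.coe_le_coe_iff]
  refine le_of_forall_le_add_mul (c := 2⁻¹ * qf M (y - u)) fun t ht => ?_
  have hsegment : (1 - t) • u + t • y = u + t • (y - u) := by module
  have hmin := (hprox _).trans (add_le_add_right
    (hR.le_coe_add_coe hu hs (sub_nonneg.mpr ht.2) ht.1.le (sub_add_cancel 1 t)) _)
  rw [hu, hsegment, show u + t • (y - u) - w = (u - w) + t • (y - u) by abel,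
    hM.qf_add_smul, ← EReal.coe_add, ← EReal.coe_add, EReal.coe_le_coe_iff] at hmin
  have hneg : mdot M (w - u) = -mdot M (u - w) := by
    rw [mdot, mdot, ← map_neg, neg_sub]
  rw [hneg, inner_neg_left]
  nlinarith [ht.1]

end Prox

section FiniteSum

variable {d n : ℕ} {f : Fin n → Euc d → ℝ} {gf : Fin n → Euc d → Euc d}

theorem hasGradientAt_Favg (hgrad : ∀ i x, HasGradientAt (f i) (gf i x) x) (x : Euc d) :
    HasGradientAt (Favg f) (gAvg gf x) x := by
  rw [hasGradientAt_iff_hasFDerivAt]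
  exact ((HasFDerivAt.fun_sum (u := .univ) fun i _ => (hgrad i x).hasFDerivAt).const_mul
    (n : ℝ)⁻¹).congr_fderiv (by rw [gAvg, map_smulₛₗ, map_sum]; rfl)

theorem convexOn_Favg (hconv : ∀ i, ConvexOn ℝ univ (f i)) : ConvexOn ℝ univ (Favg f) := by
  refine ⟨convex_univ, fun x _ y _ a b ha hb hab => ?_⟩
  have hsum := Finset.sum_le_sum fun i (_ : i ∈ Finset.univ) =>
    (hconv i).2 (mem_univ x) (mem_univ y) ha hb hab
  simp only [Favg, smul_eq_mul, Finset.sum_add_distrib, ← Finset.mul_sum] at hsum ⊢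
  have := mul_le_mul_of_nonneg_left hsum (inv_nonneg.mpr (n.cast_nonneg : (0 : ℝ) ≤ n))
  linarith

theorem norm_gAvg_sub_le {L : Fin n → ℝ} (hLip : ∀ i x y, ‖gf i x - gf i y‖ ≤ L i * ‖x - y‖)
    (x y : Euc d) : ‖gAvg gf x - gAvg gf y‖ ≤ ((n : ℝ)⁻¹ * ∑ i, L i) * ‖x - y‖ := by
  rw [gAvg, gAvg, ← smul_sub, ← Finset.sum_sub_distrib, norm_smul, Real.norm_of_nonneg
    (inv_nonneg.mpr n.cast_nonneg), mul_assoc, Finset.sum_mul]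
  gcongr
  exact (norm_sum_le _ _).trans (Finset.sum_le_sum fun i _ => hLip i x y)

theorem inv_mul_sum_le_of_isGreatest {L q : Fin n → ℝ} {LΩ : ℝ} (hq : ∀ i, 0 < q i)
    (hqs : ∑ i, q i = 1) (hLΩ : IsGreatest (range fun i => L i / ((n : ℝ) * q i)) LΩ) :
    (n : ℝ)⁻¹ * ∑ i, L i ≤ LΩ := by
  obtain ⟨⟨i, -⟩, hmax⟩ := hLΩ
  have hn : (0 : ℝ) < n := Nat.cast_pos.mpr i.pos
  have hLi (j : Fin n) : L j ≤ LΩ * n * q j := by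
    have := (div_le_iff₀ (mul_pos hn (hq j))).mp (hmax ⟨j, rfl⟩)
    linarith
  calc (n : ℝ)⁻¹ * ∑ j, L j ≤ (n : ℝ)⁻¹ * ∑ j, LΩ * n * q j := by gcongr with j; exact hLi j
    _ = LΩ := by rw [← Finset.mul_sum, hqs]; field_simp

end FiniteSum

theorem stochastic_gradient_mapping_bound_general {d n : ℕ}
    (f : Fin n → Euc d → ℝ) (gf : Fin n → Euc d → Euc d)
    (hgrad : ∀ i x, HasGradientAt (f i) (gf i x) x)
    (hconvf : ∀ i, ConvexOn ℝ Set.univ (f i))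
    (L : Fin n → ℝ) (hLip : ∀ i x y, ‖gf i x - gf i y‖ ≤ L i * ‖x - y‖)
    (q : Fin n → ℝ) (hq : ∀ i, 0 < q i) (hqs : ∑ i, q i = 1)
    (LΩ : ℝ) (hLΩ : IsGreatest (Set.range fun i => L i / ((n : ℝ) * q i)) LΩ)
    (R : Euc d → EReal) (hproper : ERealProper R)
    (hconvR : ERealConvexOn R)
    (U : Matrix (Fin d) (Fin d) ℝ) (hU : U.PosDef)
    (hUle : (LΩ⁻¹ • (1 : Matrix (Fin d) (Fin d) ℝ) - U).PosSemidef)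
    (wt v wprox : Euc d) (hprox : IsProxE R U⁻¹ (wt - mdot U v) wprox)
    (wstar : Euc d) :
    ((⟪wstar - wt, mdot U⁻¹ (wt - wprox)⟫ + 2⁻¹ * qf U (mdot U⁻¹ (wt - wprox)) : ℝ) : EReal)
      ≤ Pobj f R wstar - Pobj f R (wt - mdot U (mdot U⁻¹ (wt - wprox)))
        - ((⟪wstar - (wt - mdot U (mdot U⁻¹ (wt - wprox))), gAvg gf wt - v⟫ : ℝ) : EReal) := by
  set g := mdot U⁻¹ (wt - wprox)
  have hdet : IsUnit U.det := (Matrix.isUnit_iff_isUnit_det U).mp hU.isUnit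
  have hUg : mdot U g = wt - wprox := mdot_mdot_inv hdet _
  rw [hUg, sub_sub_cancel, Pobj, Pobj, qf, hUg]
  obtain ⟨r, hr⟩ := hprox.exists_eq_coe hproper
  have hR : ((r + ⟪g - v, wstar - wprox⟫ : ℝ) : EReal) ≤ R wstar := by
    have hsubgrad : mdot U⁻¹ (wt - mdot U v - wprox) = g - v := by
      rw [sub_right_comm, mdot_sub, mdot_inv_mdot hdet]
    simpa [hsubgrad] using hprox.coe_add_inner_le hproper.1 hconvR hU.inv.isHermitian hr wstar
  have hF := le_add_inner_add_of_convexOn_of_lipschitz_gradient (convexOn_Favg hconvf)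
    (hasGradientAt_Favg hgrad) (norm_gAvg_sub_le hLip) wt wprox wstar
  have hLΩ' : ((n : ℝ)⁻¹ * ∑ i, L i) / 2 * ‖wt - wprox‖ ^ 2 ≤ LΩ / 2 * ‖wt - wprox‖ ^ 2 := by
    gcongr; exact inv_mul_sum_le_of_isGreatest hq hqs hLΩ
  have hUL : LΩ * ‖wt - wprox‖ ^ 2 ≤ ⟪g, wt - wprox⟫ :=
    hUg ▸ mul_sq_norm_mdot_le_qf hU.posSemidef hUle g
  have key : ⟪wstar - wt, g⟫ + 2⁻¹ * ⟪g, wt - wprox⟫ ≤ Favg f wstar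
      + (r + ⟪g - v, wstar - wprox⟫) - (Favg f wprox + r) - ⟪wstar - wprox, gAvg gf wt - v⟫ := by
    rw [norm_sub_rev] at hF
    simp only [inner_sub_left, inner_sub_right, real_inner_comm g, real_inner_comm v,
      real_inner_comm (gAvg gf wt)] at hF hUL ⊢
    linarith
  rw [hr]
  calc ((⟪wstar - wt, g⟫ + 2⁻¹ * ⟪g, wt - wprox⟫ : ℝ) : EReal)
    _ ≤ ((Favg f wstar : ℝ) : EReal) + ((r + ⟪g - v, wstar - wprox⟫ : ℝ) : EReal)
        - ((Favg f wprox + r : ℝ) : EReal) - ((⟪wstar - wprox, gAvg gf wt - v⟫ : ℝ) : EReal) := by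
      exact_mod_cast key
    _ ≤ _ := EReal.sub_le_sub (EReal.sub_le_sub (add_le_add_right hR _) le_rfl) le_rfl

/-- with the finite-sum setup, `U` symmetric positive definite with
`U ≼ (1/L_Ω)I`, `g = U⁻¹(w_t − prox_R^{U⁻¹}(w_t − Uv))`, `w_{t+1} = w_t − Ug` and
`δ = ∇F(w_t) − v`, for any minimizer `w_*` of `P`:
`(w_* − w_t)ᵀg + (1/2)‖g‖_U² ≤ P(w_*) − P(w_{t+1}) − ⟨w_* − w_{t+1}, δ⟩`. -/
theorem stochastic_gradient_mapping_bound {d n : ℕ} (hn : 0 < n)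
    (f : Fin n → Euc d → ℝ) (gf : Fin n → Euc d → Euc d)
    (hgrad : ∀ i x, HasGradientAt (f i) (gf i x) x)
    (hconvf : ∀ i, ConvexOn ℝ Set.univ (f i))
    (L : Fin n → ℝ) (hLip : ∀ i x y, ‖gf i x - gf i y‖ ≤ L i * ‖x - y‖)
    (q : Fin n → ℝ) (hq : ∀ i, 0 < q i) (hqs : ∑ i, q i = 1)
    (LΩ : ℝ) (hLΩ : IsGreatest (Set.range fun i => L i / ((n : ℝ) * q i)) LΩ)
    (R : Euc d → EReal) (hproper : ERealProper R) (hlsc : LowerSemicontinuous R)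
    (hconvR : ERealConvexOn R)
    (U : Matrix (Fin d) (Fin d) ℝ) (hU : U.PosDef)
    (hUle : (LΩ⁻¹ • (1 : Matrix (Fin d) (Fin d) ℝ) - U).PosSemidef)
    (wt v wprox : Euc d) (hprox : IsProxE R U⁻¹ (wt - mdot U v) wprox)
    (wstar : Euc d) (hstar : ∀ y, Pobj f R wstar ≤ Pobj f R y) :
    ((⟪wstar - wt, mdot U⁻¹ (wt - wprox)⟫ + 2⁻¹ * qf U (mdot U⁻¹ (wt - wprox)) : ℝ) : EReal)
      ≤ Pobj f R wstar - Pobj f R (wt - mdot U (mdot U⁻¹ (wt - wprox)))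
        - ((⟪wstar - (wt - mdot U (mdot U⁻¹ (wt - wprox))), gAvg gf wt - v⟫ : ℝ) : EReal) :=
  stochastic_gradient_mapping_bound_general f gf hgrad hconvf L hLip q hq hqs LΩ hLΩ R hproper
    hconvR U hU hUle wt v wprox hprox wstar
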